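/- In the setting of the composition construction (A a MIF(l); F_x pairwise point-disjoint uniform k-families with τ(F_x) = t; G the family of unions ⊔_{x∈A} B_x over blocks A ∈ A), if furthermore each F_x is a closed intersecting family CIF(k,t) with τ(F_x^⊤) = k, then G is a closed intersecting family CIF(kl, tl). -/
import Mathlib


open Finset

variable {α : Type*} {β : Type*}

/-- `C` is a blocking set of the family `F`: it meets every block of `F`. -/
def IsBlocking (F : Set (Finset α)) (C : Finset α) : Prop :=
  ∀ B ∈ F, ∃ x ∈ B, x ∈ C

/-- The transversal number `τ(F)`: the minimum size of a (finite) blocking set. -/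
noncomputable def tau (F : Set (Finset α)) : ℕ :=
  sInf {n | ∃ C : Finset α, C.card = n ∧ IsBlocking F C}

/-- The family `F^⊤` of transversals, i.e. minimum-size blocking sets of `F`. -/
noncomputable def transversals (F : Set (Finset α)) : Set (Finset α) :=
  {C | IsBlocking F C ∧ C.card = tau F}

/-- A family is intersecting if any two of its blocks meet. -/
def FamIntersecting (F : Set (Finset α)) : Prop :=
  ∀ A ∈ F, ∀ B ∈ F, ∃ x ∈ A, x ∈ B

/-- A family is `k`-uniform if all its blocks have size `k`. -/
def FamUniform (F : Set (Finset α)) (k : ℕ) : Prop :=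
  ∀ B ∈ F, B.card = k

/-- `F` has a finite blocking set (τ(F) < ∞). -/
def HasBlocking (F : Set (Finset α)) : Prop :=
  ∃ C : Finset α, IsBlocking F C

/-- Maximal intersecting family of `k`-sets: uniform, τ < ∞ and `F = F^⊤`. -/
noncomputable def MIF (F : Set (Finset α)) (k : ℕ) : Prop :=
  FamUniform F k ∧ HasBlocking F ∧ F = transversals F

/-- Closed intersecting family `CIF(k,t)`: a `k`-uniform intersecting family with
`τ(F) = t ≤ k - 1` and `F = (F ∪ F^⊤)^⊤`. -/
noncomputable def CIF (F : Set (Finset α)) (k t : ℕ) : Prop :=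
  FamUniform F k ∧ FamIntersecting F ∧ tau F = t ∧ t ≤ k - 1 ∧
    F = transversals (F ∪ transversals F)

/-- The point set of a family. -/
def pts (F : Set (Finset α)) : Set α := ⋃ B ∈ F, (B : Set α)

/-- `G ⊛ H`: all unions `A ∪ B` with `A ∈ G`, `B ∈ H` (for point-disjoint families
these are disjoint unions). -/
def star [DecidableEq α] (G H : Set (Finset α)) : Set (Finset α) :=
  {C | ∃ A ∈ G, ∃ B ∈ H, C = A ∪ B}


/-- The composed family: one block of `F x` for each point `x` of a block of `𝒜`. -/
def comp [DecidableEq α] (𝒜 : Set (Finset β)) (F : β → Set (Finset α)) :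
    Set (Finset α) :=
  {C | ∃ S ∈ 𝒜, ∃ f : β → Finset α, (∀ x ∈ S, f x ∈ F x) ∧ C = S.biUnion f}

section MainProof

lemma tau_le_card' {F : Set (Finset α)} {C : Finset α} (h : IsBlocking F C) : tau F ≤ C.card :=
  Nat.sInf_le ⟨C, rfl, h⟩

lemma exists_transversal' {F : Set (Finset α)} (h : HasBlocking F) :
    ∃ C, IsBlocking F C ∧ C.card = tau F := by
  obtain ⟨C, hC⟩ := h
  have hne : {n | ∃ C : Finset α, C.card = n ∧ IsBlocking F C}.Nonempty := ⟨C.card, C, rfl, hC⟩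
  obtain ⟨D, hD1, hD2⟩ := Nat.sInf_mem hne
  exact ⟨D, hD2, hD1⟩

lemma hasBlocking_of_tau_pos' {F : Set (Finset α)} (h : 1 ≤ tau F) : HasBlocking F := by
  by_contra hn
  have he : {n | ∃ C : Finset α, C.card = n ∧ IsBlocking F C} = ∅ := by
    ext n; simp only [Set.mem_setOf_eq, Set.mem_empty_iff_false, iff_false]
    rintro ⟨C, -, hC⟩; exact hn ⟨C, hC⟩
  rw [tau, he, Nat.sInf_empty] at h; omega

lemma mem_pts' {F : Set (Finset α)} {B : Finset α} {p : α} (hB : B ∈ F) (hp : p ∈ B) :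
    p ∈ pts F := Set.mem_biUnion hB hp

lemma transversal_subset_pts' [DecidableEq α] {F : Set (Finset α)} {C : Finset α}
    (hC : IsBlocking F C) (hcard : C.card = tau F) (h1 : 1 ≤ tau F) : ∀ p ∈ C, p ∈ pts F := by
  intro p hp
  by_contra hn
  have hblock : IsBlocking F (C.erase p) := by
    intro B hB
    obtain ⟨x, hxB, hxC⟩ := hC B hB
    refine ⟨x, hxB, Finset.mem_erase.mpr ⟨?_, hxC⟩⟩
    rintro rfl; exact hn (mem_pts' hB hxB)
  have := tau_le_card' hblock
  rw [Finset.card_erase_of_mem hp, hcard] at this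
  omega

/-- The key "T-set" lemma. -/
lemma blocking_T' [DecidableEq α] {𝒜 : Set (Finset β)} {F H : β → Set (Finset α)}
    {C : Finset α} {c : β → Finset α}
    (hpd : ∀ x ∈ pts 𝒜, ∀ y ∈ pts 𝒜, x ≠ y → Disjoint (pts (F x)) (pts (F y)))
    (hHne : ∀ x ∈ pts 𝒜, (H x).Nonempty)
    (hHsub : ∀ x ∈ pts 𝒜, ∀ B ∈ H x, ∀ p ∈ B, p ∈ pts (F x))
    (hres : ∀ x, ∀ p, p ∈ c x ↔ p ∈ C ∧ p ∈ pts (F x))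
    (hC : IsBlocking (comp 𝒜 H) C) :
    ∃ T : Finset β, (∀ x, x ∈ T ↔ x ∈ pts 𝒜 ∧ IsBlocking (H x) (c x)) ∧ IsBlocking 𝒜 T := by
  classical
  set Tset : Set β := {x | x ∈ pts 𝒜 ∧ IsBlocking (H x) (c x)} with hTset
  have hpt : ∀ x ∈ Tset, ∃ p, p ∈ C ∧ p ∈ pts (F x) := by
    rintro x ⟨hx𝒜, hxb⟩
    obtain ⟨B, hB⟩ := hHne x hx𝒜
    obtain ⟨p, hpB, hpc⟩ := hxb B hB
    exact ⟨p, (hres x p).mp hpc⟩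
  have hpt' : ∀ x : Tset, ∃ p : {p // p ∈ C}, (p : α) ∈ pts (F (x : β)) := by
    rintro ⟨x, hx⟩
    obtain ⟨p, hp1, hp2⟩ := hpt x hx
    exact ⟨⟨p, hp1⟩, hp2⟩
  choose g hg using hpt'
  have hinj : Function.Injective g := by
    rintro ⟨x, hx⟩ ⟨y, hy⟩ hxy
    ext
    by_contra hne
    exact Set.disjoint_left.mp (hpd x hx.1 y hy.1 hne) (hg ⟨x, hx⟩) (hxy ▸ hg ⟨y, hy⟩)
  have hfin : Tset.Finite := by
    have : Finite Tset := Finite.of_injective g hinj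
    exact Set.toFinite Tset
  refine ⟨hfin.toFinset, fun x => hfin.mem_toFinset, ?_⟩
  intro S hS
  by_contra hn
  push_neg at hn
  have hchoice : ∀ x ∈ S, ∃ B, B ∈ H x ∧ ∀ p ∈ B, p ∉ C := by
    intro x hxS
    have hx𝒜 : x ∈ pts 𝒜 := mem_pts' hS hxS
    have hnb : ¬ IsBlocking (H x) (c x) := by
      intro hb
      exact hn x hxS (hfin.mem_toFinset.mpr ⟨hx𝒜, hb⟩)
    rw [IsBlocking] at hnb
    push_neg at hnb
    obtain ⟨B, hB, hB2⟩ := hnb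
    refine ⟨B, hB, fun p hp hpC => hB2 p hp ?_⟩
    exact (hres x p).mpr ⟨hpC, hHsub x hx𝒜 B hB p hp⟩
  choose! f hf1 hf2 using hchoice
  obtain ⟨q, hq1, hq2⟩ := hC (S.biUnion f) ⟨S, hS, f, hf1, rfl⟩
  obtain ⟨x, hxS, hqf⟩ := Finset.mem_biUnion.mp hq1
  exact hf2 x hxS q hqf hq2

end MainProof

theorem stmt_10 [DecidableEq α] (𝒜 : Set (Finset β)) (l k t : ℕ)
    (h𝒜 : MIF 𝒜 l) (ht1 : 1 ≤ t) (F : β → Set (Finset α))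
    (hU : ∀ x ∈ pts 𝒜, FamUniform (F x) k)
    (ht : ∀ x ∈ pts 𝒜, tau (F x) = t)
    (hpd : ∀ x ∈ pts 𝒜, ∀ y ∈ pts 𝒜, x ≠ y → Disjoint (pts (F x)) (pts (F y)))
    (hCIF : ∀ x ∈ pts 𝒜, CIF (F x) k t)
    (htop : ∀ x ∈ pts 𝒜, tau (transversals (F x)) = k) :
    CIF (comp 𝒜 F) (k * l) (t * l) := by
  classical
  obtain ⟨h𝒜U, h𝒜B, h𝒜T⟩ := h𝒜
  -- members of 𝒜 are blocking sets of 𝒜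
  have hAblock : ∀ S ∈ 𝒜, IsBlocking 𝒜 S := by
    intro S hS
    rw [h𝒜T] at hS
    exact hS.1
  -- 𝒜 is nonempty
  obtain ⟨Ct, hCt1, hCt2⟩ := exists_transversal' h𝒜B
  have hCt𝒜 : Ct ∈ 𝒜 := by rw [h𝒜T]; exact ⟨hCt1, hCt2⟩
  have htau𝒜 : tau 𝒜 = l := by rw [← hCt2, h𝒜U Ct hCt𝒜]
  -- l ≥ 1
  obtain ⟨x₀, hx₀Ct, -⟩ := hCt1 Ct hCt𝒜
  have hl : 1 ≤ l := by
    rw [← h𝒜U Ct hCt𝒜]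
    exact Finset.card_pos.mpr ⟨x₀, hx₀Ct⟩
  have hmem𝒜 : ∀ T : Finset β, IsBlocking 𝒜 T → T.card = l → T ∈ 𝒜 := by
    intro T hTb hTc
    rw [h𝒜T]
    exact ⟨hTb, by rw [hTc, htau𝒜]⟩
  have hx₀ : x₀ ∈ pts 𝒜 := mem_pts' hCt𝒜 hx₀Ct
  -- facts about each F x
  have hFne : ∀ x ∈ pts 𝒜, (F x).Nonempty := by
    intro x hx
    rcases Set.eq_empty_or_nonempty (F x) with he | hne
    · exfalso
      have hb : IsBlocking (F x) ∅ := by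
        intro B hB; rw [he] at hB; exact absurd hB (Set.notMem_empty B)
      have := tau_le_card' hb
      rw [ht x hx, Finset.card_empty] at this
      omega
    · exact hne
  have hFB : ∀ x ∈ pts 𝒜, HasBlocking (F x) :=
    fun x hx => hasBlocking_of_tau_pos' (by rw [ht x hx]; exact ht1)
  have hTne : ∀ x ∈ pts 𝒜, (transversals (F x)).Nonempty := by
    intro x hx
    obtain ⟨D, hD1, hD2⟩ := exists_transversal' (hFB x hx)
    exact ⟨D, hD1, hD2⟩
  have hTsub : ∀ x ∈ pts 𝒜, ∀ D ∈ transversals (F x), ∀ p ∈ D, p ∈ pts (F x) := by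
    intro x hx D hD
    exact transversal_subset_pts' hD.1 hD.2 (by rw [ht x hx]; exact ht1)
  have hFsub : ∀ x ∈ pts 𝒜, ∀ B ∈ F x, ∀ p ∈ B, p ∈ pts (F x) :=
    fun x _ B hB p hp => mem_pts' hB hp
  -- τ(F x ∪ F x ^⊤) = k
  have hkx : ∀ x ∈ pts 𝒜, tau (F x ∪ transversals (F x)) = k := by
    intro x hx
    obtain ⟨B, hB⟩ := hFne x hx
    have hB' := hB
    rw [(hCIF x hx).2.2.2.2] at hB'
    rw [← hB'.2, hU x hx B hB]
  -- t < k, k ≥ 1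
  have hk : t < k := by
    have h1 := (hCIF x₀ hx₀).2.2.2.1
    omega
  have hα : Nonempty α := by
    obtain ⟨B, hB⟩ := hFne x₀ hx₀
    have : B.card = k := hU x₀ hx₀ B hB
    obtain ⟨p, -⟩ := Finset.card_pos.mp (by omega : 0 < B.card)
    exact ⟨p⟩
  -- restriction of a finite set to the points of F x
  set res : Finset α → β → Finset α := fun C x => C.filter (fun p => p ∈ pts (F x)) with hresdef
  have hres : ∀ (C : Finset α) (x : β) (p : α), p ∈ res C x ↔ p ∈ C ∧ p ∈ pts (F x) := by
    intro C x p; simp [hresdef]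
  -- counting
  have hcount : ∀ (C : Finset α) (T : Finset β), (∀ x ∈ T, x ∈ pts 𝒜) →
      (T.biUnion (res C)).card = ∑ x ∈ T, (res C x).card ∧ (T.biUnion (res C)).card ≤ C.card := by
    intro C T hT
    have hdisj : ∀ x ∈ T, ∀ y ∈ T, x ≠ y → Disjoint (res C x) (res C y) := by
      intro x hx y hy hxy
      rw [Finset.disjoint_left]
      intro p hpx hpy
      exact Set.disjoint_left.mp (hpd x (hT x hx) y (hT y hy) hxy)
        ((hres C x p).mp hpx).2 ((hres C y p).mp hpy).2
    refine ⟨Finset.card_biUnion hdisj, Finset.card_le_card ?_⟩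
    intro p hp
    obtain ⟨x, -, hpx⟩ := Finset.mem_biUnion.mp hp
    exact ((hres C x p).mp hpx).1
  -- cardinality of composed blocks
  have hcardU : ∀ (S : Finset β) (f : β → Finset α) (m : ℕ), S ∈ 𝒜 →
      (∀ x ∈ S, (∀ p ∈ f x, p ∈ pts (F x)) ∧ (f x).card = m) → (S.biUnion f).card = m * l := by
    intro S f m hS hf
    have hdisj : ∀ x ∈ S, ∀ y ∈ S, x ≠ y → Disjoint (f x) (f y) := by
      intro x hx y hy hxy
      rw [Finset.disjoint_left]
      intro p hpx hpy
      exact Set.disjoint_left.mp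
        (hpd x (mem_pts' hS hx) y (mem_pts' hS hy) hxy)
        ((hf x hx).1 p hpx) ((hf y hy).1 p hpy)
    rw [Finset.card_biUnion hdisj]
    calc ∑ x ∈ S, (f x).card = ∑ _x ∈ S, m := Finset.sum_congr rfl (fun x hx => (hf x hx).2)
      _ = S.card * m := by rw [Finset.sum_const, smul_eq_mul]
      _ = m * l := by rw [h𝒜U S hS, Nat.mul_comm]
  -- unions of per-point blocking sets over a block of 𝒜 block the composition
  have hbc : ∀ S ∈ 𝒜, ∀ g : β → Finset α, (∀ x ∈ S, IsBlocking (F x) (g x)) →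
      IsBlocking (comp 𝒜 F) (S.biUnion g) := by
    rintro S hS g hg D ⟨S', hS', f, hf, rfl⟩
    obtain ⟨x, hxS', hxS⟩ := hAblock S hS S' hS'
    obtain ⟨p, hpf, hpg⟩ := hg x hxS (f x) (hf x hxS')
    exact ⟨p, Finset.mem_biUnion.mpr ⟨x, hxS', hpf⟩, Finset.mem_biUnion.mpr ⟨x, hxS, hpg⟩⟩
  -- Part 1: uniformity
  have hGU : FamUniform (comp 𝒜 F) (k * l) := by
    rintro D ⟨S, hS, f, hf, rfl⟩
    exact hcardU S f k hS (fun x hx =>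
      ⟨hFsub x (mem_pts' hS hx) (f x) (hf x hx), hU x (mem_pts' hS hx) (f x) (hf x hx)⟩)
  -- Part 2: intersecting
  have hGI : FamIntersecting (comp 𝒜 F) := by
    rintro D ⟨S, hS, f, hf, rfl⟩ D' ⟨S', hS', f', hf', rfl⟩
    obtain ⟨x, hxS', hxS⟩ := hAblock S hS S' hS'
    obtain ⟨p, hp1, hp2⟩ := (hCIF x (mem_pts' hS hxS)).2.1 (f x) (hf x hxS) (f' x) (hf' x hxS')
    exact ⟨p, Finset.mem_biUnion.mpr ⟨x, hxS, hp1⟩, Finset.mem_biUnion.mpr ⟨x, hxS', hp2⟩⟩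
  -- choose minimum transversals and blocks of each F x
  have htrex : ∀ x, x ∈ pts 𝒜 → ∃ D, IsBlocking (F x) D ∧ D.card = tau (F x) :=
    fun x hx => exists_transversal' (hFB x hx)
  choose! tr htr1 htr2 using htrex
  have htrm : ∀ x ∈ pts 𝒜, tr x ∈ transversals (F x) := fun x hx => ⟨htr1 x hx, htr2 x hx⟩
  -- the canonical small blocking set of the composition
  have hCtrb : IsBlocking (comp 𝒜 F) (Ct.biUnion tr) :=
    hbc Ct hCt𝒜 tr (fun x hx => htr1 x (mem_pts' hCt𝒜 hx))
  have hCtrc : (Ct.biUnion tr).card = t * l := by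
    refine hcardU Ct tr t hCt𝒜 (fun x hx => ?_)
    have hx𝒜 := mem_pts' hCt𝒜 hx
    exact ⟨hTsub x hx𝒜 (tr x) (htrm x hx𝒜), by rw [htr2 x hx𝒜, ht x hx𝒜]⟩
  -- Part 3: tau of the composition
  have tauG : tau (comp 𝒜 F) = t * l := by
    refine le_antisymm (by rw [← hCtrc]; exact tau_le_card' hCtrb) ?_
    obtain ⟨D, hD1, hD2⟩ := exists_transversal' ⟨Ct.biUnion tr, hCtrb⟩
    rw [← hD2]
    obtain ⟨T, hTmem, hTb⟩ := blocking_T' hpd hFne hFsub (hres D) hD1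
    obtain ⟨hc1, hc2⟩ := hcount D T (fun x hx => ((hTmem x).mp hx).1)
    have hTcard : l ≤ T.card := by rw [← htau𝒜]; exact tau_le_card' hTb
    have hsum : T.card * t ≤ ∑ x ∈ T, (res D x).card := by
      refine Finset.card_nsmul_le_sum T _ t (fun x hx => ?_)
      obtain ⟨hx𝒜, hxb⟩ := (hTmem x).mp hx
      rw [← ht x hx𝒜]
      exact tau_le_card' hxb
    calc t * l = l * t := Nat.mul_comm t l
      _ ≤ T.card * t := Nat.mul_le_mul hTcard le_rfl
      _ ≤ ∑ x ∈ T, (res D x).card := hsum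
      _ = (T.biUnion (res D)).card := hc1.symm
      _ ≤ D.card := hc2
  -- Part 4: composition of transversals lands in transversals of the composition
  have hGsub : comp 𝒜 (fun x => transversals (F x)) ⊆ transversals (comp 𝒜 F) := by
    rintro D ⟨S, hS, f, hf, rfl⟩
    constructor
    · exact hbc S hS f (fun x hx => (hf x hx).1)
    · rw [tauG]
      refine hcardU S f t hS (fun x hx => ?_)
      have hx𝒜 := mem_pts' hS hx
      exact ⟨hTsub x hx𝒜 (f x) (hf x hx), by rw [(hf x hx).2, ht x hx𝒜]⟩
  -- every block of the composition blocks G ∪ G^⊤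
  have hGblk : ∀ B ∈ comp 𝒜 F,
      IsBlocking (comp 𝒜 F ∪ transversals (comp 𝒜 F)) B := by
    intro B hB D hD
    rcases hD with hD | hD
    · exact hGI D hD B hB
    · obtain ⟨x, hx1, hx2⟩ := hD.1 B hB
      exact ⟨x, hx2, hx1⟩
  -- a concrete block of the composition
  have hblex : ∀ x, x ∈ pts 𝒜 → ∃ B, B ∈ F x := fun x hx => hFne x hx
  choose! bl hbl using hblex
  have hB₀G : Ct.biUnion bl ∈ comp 𝒜 F :=
    ⟨Ct, hCt𝒜, bl, fun x hx => hbl x (mem_pts' hCt𝒜 hx), rfl⟩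
  -- the main argument
  have hmain : ∀ C : Finset α, IsBlocking (comp 𝒜 F ∪ transversals (comp 𝒜 F)) C →
      k * l ≤ C.card ∧ (C.card = k * l → C ∈ comp 𝒜 F) := by
    intro C hC
    have hCG : IsBlocking (comp 𝒜 F) C := fun D hD => hC D (Or.inl hD)
    have hCT : IsBlocking (comp 𝒜 (fun x => transversals (F x))) C :=
      fun D hD => hC D (Or.inr (hGsub hD))
    obtain ⟨T₂, hT₂mem, hT₂b⟩ := blocking_T' hpd hTne hTsub (hres C) hCT
    obtain ⟨T₁, hT₁mem, hT₁b⟩ := blocking_T' hpd hFne hFsub (hres C) hCG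
    have hT₂pts : ∀ x ∈ T₂, x ∈ pts 𝒜 := fun x hx => ((hT₂mem x).mp hx).1
    obtain ⟨hc1, hc2⟩ := hcount C T₂ hT₂pts
    have hT₂card : l ≤ T₂.card := by rw [← htau𝒜]; exact tau_le_card' hT₂b
    have hT₂k : ∀ x ∈ T₂, k ≤ (res C x).card := by
      intro x hx
      obtain ⟨hx𝒜, hxb⟩ := (hT₂mem x).mp hx
      rw [← htop x hx𝒜]
      exact tau_le_card' hxb
    have hsum2 : T₂.card * k ≤ ∑ x ∈ T₂, (res C x).card :=
      Finset.card_nsmul_le_sum T₂ _ k hT₂k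
    have hge : k * l ≤ C.card := by
      calc k * l = l * k := Nat.mul_comm k l
        _ ≤ T₂.card * k := Nat.mul_le_mul hT₂card le_rfl
        _ ≤ ∑ x ∈ T₂, (res C x).card := hsum2
        _ = (T₂.biUnion (res C)).card := hc1.symm
        _ ≤ C.card := hc2
    refine ⟨hge, fun hCeq => ?_⟩
    -- equality analysis
    have hsumle : ∑ x ∈ T₂, (res C x).card ≤ k * l := by rw [← hCeq, ← hc1]; exact hc2
    have hT₂l : T₂.card = l := by
      have h1 : T₂.card * k ≤ l * k :=
        le_trans hsum2 (le_trans hsumle (le_of_eq (Nat.mul_comm k l)))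
      have hk1 : 0 < k := by omega
      exact le_antisymm (Nat.le_of_mul_le_mul_right h1 hk1) hT₂card
    have hsumeq : ∑ x ∈ T₂, (res C x).card = k * l := by
      refine le_antisymm hsumle ?_
      calc k * l = T₂.card * k := by rw [hT₂l, Nat.mul_comm]
        _ ≤ _ := hsum2
    have hallk : ∀ x ∈ T₂, (res C x).card = k := by
      intro x hx
      have heq : ∑ _x ∈ T₂, k = ∑ x ∈ T₂, (res C x).card := by
        rw [hsumeq, Finset.sum_const, smul_eq_mul, hT₂l, Nat.mul_comm]
      exact ((Finset.sum_eq_sum_iff_of_le hT₂k).mp heq x hx).symm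
    -- T₁ ⊆ T₂
    have hT₁sub : T₁ ⊆ T₂ := by
      intro x hx
      by_contra hxT₂
      obtain ⟨hx𝒜, hxb⟩ := (hT₁mem x).mp hx
      obtain ⟨hc1', hc2'⟩ := hcount C (insert x T₂) (by
        intro y hy
        rcases Finset.mem_insert.mp hy with rfl | hy
        · exact hx𝒜
        · exact hT₂pts y hy)
      have hxt : t ≤ (res C x).card := by
        rw [← ht x hx𝒜]; exact tau_le_card' hxb
      have hle : ∑ y ∈ insert x T₂, (res C y).card ≤ C.card := by
        rw [← hc1']; exact hc2'
      rw [Finset.sum_insert hxT₂, hsumeq, hCeq] at hle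
      omega
    have hT₁eq : T₁ = T₂ := by
      refine Finset.eq_of_subset_of_card_le hT₁sub ?_
      rw [hT₂l, ← htau𝒜]
      exact tau_le_card' hT₁b
    have hT₂𝒜 : T₂ ∈ 𝒜 := hmem𝒜 T₂ hT₂b hT₂l
    -- C is the disjoint union of its restrictions
    have hCeq2 : T₂.biUnion (res C) = C := by
      refine Finset.eq_of_subset_of_card_le ?_ ?_
      · intro p hp
        obtain ⟨x, -, hpx⟩ := Finset.mem_biUnion.mp hp
        exact ((hres C x p).mp hpx).1
      · rw [hc1, hsumeq, hCeq]
    -- each restriction is a block of F x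
    have hresF : ∀ x ∈ T₂, res C x ∈ F x := by
      intro x hx
      have hx𝒜 := hT₂pts x hx
      have hxb2 : IsBlocking (transversals (F x)) (res C x) := ((hT₂mem x).mp hx).2
      have hxb1 : IsBlocking (F x) (res C x) := ((hT₁mem x).mp (hT₁eq ▸ hx)).2
      have hxbU : IsBlocking (F x ∪ transversals (F x)) (res C x) := by
        intro D hD
        rcases hD with hD | hD
        · exact hxb1 D hD
        · exact hxb2 D hD
      rw [(hCIF x hx𝒜).2.2.2.2]
      exact ⟨hxbU, by rw [hallk x hx, hkx x hx𝒜]⟩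
    exact ⟨T₂, hT₂𝒜, res C, hresF, hCeq2.symm⟩
  -- τ(G ∪ G^⊤) = k·l
  have tauGG : tau (comp 𝒜 F ∪ transversals (comp 𝒜 F)) = k * l := by
    refine le_antisymm ?_ ?_
    · have := tau_le_card' (hGblk _ hB₀G)
      rwa [hGU _ hB₀G] at this
    · obtain ⟨D, hD1, hD2⟩ := exists_transversal' ⟨Ct.biUnion bl, hGblk _ hB₀G⟩
      rw [← hD2]
      exact (hmain D hD1).1
  -- Part 5: closedness
  have hclosed : comp 𝒜 F = transversals (comp 𝒜 F ∪ transversals (comp 𝒜 F)) := by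
    ext D
    constructor
    · intro hD
      exact ⟨hGblk D hD, by rw [hGU D hD, tauGG]⟩
    · rintro ⟨hD1, hD2⟩
      exact (hmain D hD1).2 (by rw [hD2, tauGG])
  -- final inequality t·l ≤ k·l − 1
  have hineq : t * l ≤ k * l - 1 := by
    calc t * l ≤ (k - 1) * l := Nat.mul_le_mul_right l (by omega)
      _ = k * l - l := by rw [Nat.sub_mul, Nat.one_mul]
      _ ≤ k * l - 1 := Nat.sub_le_sub_left hl _
  exact ⟨hGU, hGI, tauG, hineq, hclosed⟩
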